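/- arXiv:2305.07542 — 2 statements merged into one kernel-verified Lean document; each statement's English description precedes it below -/
import Mathlib

section
/- (Partial fraction decomposition on the sphere) Let ι, κ_{ℓ-1}, κ_ℓ ∈ ℂ² be pairwise non-proportional spinors (all mutual brackets nonzero). Then for every λ ∈ ℂ² with ⟨ιλ⟩, ⟨κ_{ℓ-1}λ⟩, ⟨κ_ℓλ⟩ all nonzero, the matrix identity λ_α λ_β /(⟨ιλ⟩⟨κ_{ℓ-1}λ⟩⟨κ_ℓλ⟩) = κ_{ℓ-1,α}κ_{ℓ-1,β}/(⟨κ_{ℓ-1}κ_ℓ⟩²⟨ικ_{ℓ-1}⟩)·(⟨ικ_ℓ⟩/⟨ιλ⟩ − ⟨κ_{ℓ-1}κ_ℓ⟩/⟨κ_{ℓ-1}λ⟩) + κ_{ℓ,α}κ_{ℓ,β}/(⟨κ_{ℓ-1}κ_ℓ⟩²⟨ικ_ℓ⟩)·(⟨ικ_{ℓ-1}⟩/⟨ιλ⟩ − ⟨κ_ℓκ_{ℓ-1}⟩/⟨κ_ℓλ⟩) − (κ_{ℓ-1,α}κ_{ℓ,β} + κ_{ℓ-1,β}κ_{ℓ,α})/(⟨κ_{ℓ-1}κ_ℓ⟩²⟨ιλ⟩)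 holds for each pair of indices α, β ∈ {0,1}. -/
set_option maxHeartbeats 1000000


/-- The antisymmetric spinor bracket ⟨ab⟩ = a⁰b¹ − a¹b⁰ on ℂ². -/
def bracket (a b : Fin 2 → ℂ) : ℂ := a 0 * b 1 - a 1 * b 0

lemma helper_pf (A B C P Q R x u v w : ℂ)
    (hA : A≠0) (hB : B≠0) (hC : C≠0) (hP : P≠0) (hQ : Q≠0) (hR : R≠0)
    (key : x*(R^2*P*Q) = u*Q*(Q*B*C - R*A*C) + v*P*(P*B*C + R*A*B) - w*P*Q*B*C) :
    x/(A*B*C) = u/(R^2*P)*(Q/A - R/B) + v/(R^2*Q)*(P/A + R/C) - w/(R^2*A) := by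
  have hR2 : R^2 ≠ 0 := pow_ne_zero _ hR
  have h1 : R^2*P*(A*B) ≠ 0 := mul_ne_zero (mul_ne_zero hR2 hP) (mul_ne_zero hA hB)
  have h2 : R^2*Q*(A*C) ≠ 0 := mul_ne_zero (mul_ne_zero hR2 hQ) (mul_ne_zero hA hC)
  have h3 : R^2*A ≠ 0 := mul_ne_zero hR2 hA
  rw [div_sub_div _ _ hA hB, div_add_div _ _ hA hC, div_mul_div_comm, div_mul_div_comm,
    div_add_div _ _ h1 h2, div_sub_div _ _ (mul_ne_zero h1 h2) h3,
    div_eq_div_iff (mul_ne_zero (mul_ne_zero hA hB) hC) (mul_ne_zero (mul_ne_zero h1 h2) h3)]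
  linear_combination (R^4*A^3*B*C)*key

/-- Partial fraction decomposition on the sphere for the rational kernel
λ_α λ_β /(⟨ιλ⟩⟨κ₀λ⟩⟨κ₁λ⟩). -/
theorem partial_fraction_on_sphere (ι κ₀ κ₁ lam : Fin 2 → ℂ)
    (h₀ : bracket ι κ₀ ≠ 0) (h₁ : bracket ι κ₁ ≠ 0)
    (h₀₁ : bracket κ₀ κ₁ ≠ 0)
    (hι : bracket ι lam ≠ 0) (hκ₀ : bracket κ₀ lam ≠ 0)
    (hκ₁ : bracket κ₁ lam ≠ 0) (α β : Fin 2) :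
    lam α * lam β / (bracket ι lam * bracket κ₀ lam * bracket κ₁ lam) =
      κ₀ α * κ₀ β / (bracket κ₀ κ₁ ^ 2 * bracket ι κ₀)
          * (bracket ι κ₁ / bracket ι lam - bracket κ₀ κ₁ / bracket κ₀ lam)
        + κ₁ α * κ₁ β / (bracket κ₀ κ₁ ^ 2 * bracket ι κ₁)
          * (bracket ι κ₀ / bracket ι lam - bracket κ₁ κ₀ / bracket κ₁ lam)
        - (κ₀ α * κ₁ β + κ₀ β * κ₁ α) / (bracket κ₀ κ₁ ^ 2 * bracket ι lam) := by
  have hneg : bracket κ₁ κ₀ = -bracket κ₀ κ₁ := by simp only [bracket]; ring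
  rw [hneg, neg_div, sub_neg_eq_add]
  apply helper_pf _ _ _ _ _ _ _ _ _ _ hι hκ₀ hκ₁ h₀ h₁ h₀₁
  fin_cases α <;> fin_cases β <;> (simp only [Fin.mk_zero, Fin.mk_one, bracket]; ring)
end

section
/- Suppose a ℂ²-indexed family of linear operators ∇_{α α̇} on a module satisfies: for every λ ∈ ℂ² and fixed invertible H(λ), λ^α ∇_{α α̇} H⁻¹(λ) = 0 for both α̇ = 0, 1. Then λ^α λ^β [∇_{α α̇}, ∇_{β β̇}] H⁻¹(λ) = 0 for all λ, and consequently if F_{α α̇ β β̇} denotes the commutator curvature, its totally undotted-symmetric part contracted with λ^α λ^β annihilates H⁻¹(λ) for every λ; if this holds for at least three pairwise non-proportional values of λ and H⁻¹(λ) is invertible, then the anti-self-dual curvature component F_{αβ} (defined by F_{α α̇ β β̇} = ε_{αβ} F̃_{α̇β̇} + ε_{α̇β̇} F_{αβ} with F_{αβ} symmetric) vanishes. -/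
noncomputable section

/-- The antisymmetric ε tensor on two indices, ε₀₁ = 1 = −ε₁₀. -/
def eps : Fin 2 → Fin 2 → ℂ := fun i j =>
  if i = j then 0 else if i = 0 then 1 else -1

/-- Polarization: a symmetric "quadratic form" with values in a ℂ-module that
vanishes at three pairwise non-proportional points of ℂ² is identically zero. -/
lemma polar3 {M : Type*} [AddCommGroup M] [Module ℂ M]
    (A B C : M) (p1 q1 p2 q2 p3 q3 : ℂ)
    (h12 : p1*q2 - p2*q1 ≠ 0) (h13 : p1*q3 - p3*q1 ≠ 0) (h23 : p2*q3 - p3*q2 ≠ 0)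
    (L1 : (p1*p1)•A + (2*(p1*q1))•C + (q1*q1)•B = 0)
    (L2 : (p2*p2)•A + (2*(p2*q2))•C + (q2*q2)•B = 0)
    (L3 : (p3*p3)•A + (2*(p3*q3))•C + (q3*q3)•B = 0) :
    A = 0 ∧ B = 0 ∧ C = 0 := by
  set d : ℂ := 2*(p1*q2-p2*q1)*(p1*q3-p3*q1)*(p2*q3-p3*q2) with hdd
  have hd : d ≠ 0 := by
    simp only [hdd]
    intro h
    rcases mul_eq_zero.1 h with h' | h'
    · rcases mul_eq_zero.1 h' with h'' | h''
      · rcases mul_eq_zero.1 h'' with h3 | h3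
        · norm_num at h3
        · exact h12 h3
      · exact h13 h''
    · exact h23 h'
  have solve : ∀ x : M, d • x = 0 → x = 0 := by
    intro x hx
    have := congrArg (fun y => d⁻¹ • y) hx
    simpa [smul_smul, inv_mul_cancel₀ hd] using this
  refine ⟨solve A ?_, solve B ?_, solve C ?_⟩
  · calc d • A = (2*q2*q3*(p2*q3-p3*q2)) • ((p1*p1)•A + (2*(p1*q1))•C + (q1*q1)•B)
        + (-(2*q1*q3*(p1*q3-p3*q1))) • ((p2*p2)•A + (2*(p2*q2))•C + (q2*q2)•B)
        + (2*q1*q2*(p1*q2-p2*q1)) • ((p3*p3)•A + (2*(p3*q3))•C + (q3*q3)•B) := by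
          module
    _ = 0 := by rw [L1, L2, L3]; simp
  · calc d • B = (2*p2*p3*(p2*q3-p3*q2)) • ((p1*p1)•A + (2*(p1*q1))•C + (q1*q1)•B)
        + (-(2*p1*p3*(p1*q3-p3*q1))) • ((p2*p2)•A + (2*(p2*q2))•C + (q2*q2)•B)
        + (2*p1*p2*(p1*q2-p2*q1)) • ((p3*p3)•A + (2*(p3*q3))•C + (q3*q3)•B) := by
          module
    _ = 0 := by rw [L1, L2, L3]; simp
  · calc d • C = (-((p2*q3-p3*q2)*(p2*q3+p3*q2))) • ((p1*p1)•A + (2*(p1*q1))•C + (q1*q1)•B)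
        + ((p1*q3-p3*q1)*(p1*q3+p3*q1)) • ((p2*p2)•A + (2*(p2*q2))•C + (q2*q2)•B)
        + (-((p1*q2-p2*q1)*(p1*q2+p2*q1))) • ((p3*p3)•A + (2*(p3*q3))•C + (q3*q3)•B) := by
          module
    _ = 0 := by rw [L1, L2, L3]; simp

/-- If λ^α ∇_{αα̇} H⁻¹(λ) = 0 for all λ, then λ^αλ^β [∇_{αα̇},∇_{ββ̇}] H⁻¹(λ) = 0;
and if the commutator curvature decomposes as F = ε F̃ + ε F_{ASD} with F_{ASD}
symmetric and the contracted equation holds at three pairwise non-proportional λ's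
where H⁻¹ is invertible, then the anti-self-dual curvature F_{ASD} vanishes. -/
theorem asd_curvature_vanishes {R : Type*} [Ring R] [Algebra ℂ R]
    (D : Fin 2 → Fin 2 → (R →ₗ[ℂ] R))
    (Hinv : (Fin 2 → ℂ) → R)
    (F : Fin 2 → Fin 2 → Fin 2 → Fin 2 → R) (Ftilde Fasd : Fin 2 → Fin 2 → R)
    (hmain : ∀ (lam : Fin 2 → ℂ) (ad : Fin 2),
      ∑ a : Fin 2, lam a • D a ad (Hinv lam) = 0)
    (hcurv : ∀ (a ad b bd : Fin 2) (r : R),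
      D a ad (D b bd r) - D b bd (D a ad r) = F a ad b bd * r)
    (hdecomp : ∀ a ad b bd : Fin 2,
      F a ad b bd = algebraMap ℂ R (eps a b) * Ftilde ad bd
        + algebraMap ℂ R (eps ad bd) * Fasd a b)
    (hsymm : ∀ a b : Fin 2, Fasd a b = Fasd b a)
    (lam₁ lam₂ lam₃ : Fin 2 → ℂ)
    (h₁₂ : bracket lam₁ lam₂ ≠ 0) (h₁₃ : bracket lam₁ lam₃ ≠ 0)
    (h₂₃ : bracket lam₂ lam₃ ≠ 0)
    (hu₁ : IsUnit (Hinv lam₁)) (hu₂ : IsUnit (Hinv lam₂))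
    (hu₃ : IsUnit (Hinv lam₃)) :
    (∀ (lam : Fin 2 → ℂ) (ad bd : Fin 2),
        ∑ a : Fin 2, ∑ b : Fin 2,
          (lam a * lam b) • (D a ad (D b bd (Hinv lam))
            - D b bd (D a ad (Hinv lam))) = 0)
      ∧ (∀ a b : Fin 2, Fasd a b = 0) := by
  have key : ∀ (lam : Fin 2 → ℂ) (ad bd : Fin 2),
      ∑ a : Fin 2, ∑ b : Fin 2, (lam a * lam b) • (D a ad (D b bd (Hinv lam))) = 0 := by
    intro lam ad bd
    have h1 : ∀ a : Fin 2, ∑ b : Fin 2, (lam a * lam b) • (D a ad (D b bd (Hinv lam)))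
        = lam a • D a ad (∑ b : Fin 2, lam b • D b bd (Hinv lam)) := by
      intro a
      rw [map_sum, Finset.smul_sum]
      refine Finset.sum_congr rfl fun b _ => ?_
      rw [map_smul, smul_smul]
    simp [h1, hmain lam bd]
  have part1 : ∀ (lam : Fin 2 → ℂ) (ad bd : Fin 2),
      ∑ a : Fin 2, ∑ b : Fin 2,
        (lam a * lam b) • (D a ad (D b bd (Hinv lam))
          - D b bd (D a ad (Hinv lam))) = 0 := by
    intro lam ad bd
    have h2 : ∑ a : Fin 2, ∑ b : Fin 2, (lam a * lam b) • (D b bd (D a ad (Hinv lam))) = 0 := by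
      rw [Finset.sum_comm]
      have := key lam bd ad
      simpa [mul_comm] using this
    calc ∑ a : Fin 2, ∑ b : Fin 2,
        (lam a * lam b) • (D a ad (D b bd (Hinv lam)) - D b bd (D a ad (Hinv lam)))
        = (∑ a : Fin 2, ∑ b : Fin 2, (lam a * lam b) • (D a ad (D b bd (Hinv lam))))
          - ∑ a : Fin 2, ∑ b : Fin 2, (lam a * lam b) • (D b bd (D a ad (Hinv lam))) := by
          simp [smul_sub, Finset.sum_sub_distrib]
      _ = 0 := by rw [key lam ad bd, h2, sub_zero]
  refine ⟨part1, ?_⟩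
  -- extract (quadratic form) * Hinv = 0
  have hSH : ∀ lam : Fin 2 → ℂ,
      ((lam 0*lam 0) • Fasd 0 0 + (2*(lam 0*lam 1)) • Fasd 0 1 + (lam 1*lam 1) • Fasd 1 1)
        * Hinv lam = 0 := by
    intro lam
    have h := part1 lam 0 1
    simp only [hcurv, hdecomp] at h
    simp only [Fin.sum_univ_two] at h
    rw [hsymm 1 0] at h
    norm_num [eps, Algebra.smul_def] at h
    simp only [add_mul, neg_mul, smul_mul_assoc, ← Algebra.smul_def] at h ⊢
    linear_combination (norm := module) h
  have hS : ∀ lam : Fin 2 → ℂ, IsUnit (Hinv lam) →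
      (lam 0*lam 0) • Fasd 0 0 + (2*(lam 0*lam 1)) • Fasd 0 1 + (lam 1*lam 1) • Fasd 1 1 = 0 := by
    intro lam hu
    rcases hu with ⟨u, hu⟩
    have := hSH lam
    rw [← hu] at this
    exact (Units.mul_left_eq_zero u).1 this
  have br : ∀ x y : Fin 2 → ℂ, bracket x y = x 0 * y 1 - y 0 * x 1 := by
    intro x y; rw [bracket]; ring
  rw [br] at h₁₂ h₁₃ h₂₃
  obtain ⟨hA, hB, hC⟩ := polar3 (Fasd 0 0) (Fasd 1 1) (Fasd 0 1)
    (lam₁ 0) (lam₁ 1) (lam₂ 0) (lam₂ 1) (lam₃ 0) (lam₃ 1)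
    h₁₂ h₁₃ h₂₃ (hS lam₁ hu₁) (hS lam₂ hu₂) (hS lam₃ hu₃)
  intro a b
  fin_cases a <;> fin_cases b
  · exact hA
  · exact hC
  · rw [hsymm]; exact hC
  · exact hB

end
end
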